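/- arXiv:2205.11552 — 4 statements merged into one kernel-verified Lean document; each statement's English description precedes it below -/
import Mathlib

section
/- Let H be the heart of a bounded t-structure on a triangulated category T. Let x, y ∈ T with x ∈ [[a,b]]_H and y ∈ [[c,d]]_H (cohomology with respect to H concentrated in [a,b] resp. [c,d], nonvanishing at both endpoints). Then there is an isomorphism Hom_T(y, x[a-d]) ≅ Hom_T(H^d_H(y), H^a_H(x)). -/
/-!
Boundedness together with the vanishing of cohomology outside `[a, b]` and `[c, d]` gives
`x ≥ a` and `y ≤ d`, so `H^d(y) ≅ (τ_{≥ d} y)⟦d⟧` and `H^a(x) ≅ (τ_{≤ a} x)⟦a⟧`. As `x⟦a - d⟧ ≥ d`,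
maps `y ⟶ x⟦a - d⟧` factor uniquely through `τ_{≥ d} y`; shifting, maps from
`(τ_{≥ d} y)⟦d - a⟧ ≤ a` to `x` factor uniquely through `τ_{≤ a} x`.
-/

open CategoryTheory Limits Pretriangulated Triangulated

namespace TSt

variable {C : Type*} [Category C] [Preadditive C] [HasZeroObject C] [HasShift C ℤ]
  [∀ (n : ℤ), (shiftFunctor C n).Additive] [Pretriangulated C]

/-- The truncation `τ_{≤ n} A` with respect to a t-structure, defined (up to isomorphism)
by the triangle `τ_{≤n} A → A → τ_{≥ n+1} A → `. -/
noncomputable def truncLEObj (t : TStructure C) (n : ℤ) (A : C) : C :=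
  (t.exists_triangle A n (n + 1) rfl).choose

/-- The truncation `τ_{≥ n} A` with respect to a t-structure. -/
noncomputable def truncGEObj (t : TStructure C) (n : ℤ) (A : C) : C :=
  (t.exists_triangle A (n - 1) n (by omega)).choose_spec.choose

/-- The `n`-th cohomology object of `A` with respect to the t-structure `t`:
`H^n(A) = (τ_{≥ n} τ_{≤ n} A)⟦n⟧`, an object of the heart. -/
noncomputable def cohObj (t : TStructure C) (n : ℤ) (A : C) : C :=
  (truncGEObj t n (truncLEObj t n A))⟦n⟧

/-- Membership in the heart of a t-structure. -/
def InHeart (t : TStructure C) (A : C) : Prop := t.le 0 A ∧ t.ge 0 A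

/-- A t-structure is bounded if every object is bounded above and below for it. -/
def IsBoundedTStructure (t : TStructure C) : Prop :=
  ∀ X : C, ∃ a b : ℤ, t.ge a X ∧ t.le b X

/-- `x ∈ [a,b]_t` : the cohomology of `x` with respect to `t` vanishes outside `[a,b]`. -/
def MemIcc (t : TStructure C) (a b : ℤ) (x : C) : Prop :=
  ∀ i : ℤ, (i < a ∨ b < i) → IsZero (cohObj t i x)

/-- `x ∈ [[a,b]]_t` : cohomology concentrated in `[a,b]`, nonzero at both endpoints. -/
def MemIccStrict (t : TStructure C) (a b : ℤ) (x : C) : Prop :=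
  MemIcc t a b x ∧ ¬ IsZero (cohObj t a x) ∧ ¬ IsZero (cohObj t b x)

noncomputable def shiftHomAddEquiv (X Y : C) (i j : ℤ) (h : i + j = 0) :
    (X⟦i⟧ ⟶ Y) ≃+ (X ⟶ Y⟦j⟧) :=
  have : (shiftEquiv' C i j h).functor.Additive := inferInstanceAs (shiftFunctor C i).Additive
  (shiftEquiv' C i j h).toAdjunction.homAddEquiv X Y

section

variable (t : TStructure C)

/- Mathlib provides these, for arbitrary pairs of indices, only under `[IsTriangulated C]`;
for equal indices the orthogonality characterisations suffice. -/
lemma isGE_truncLE_obj_of_isGE (n : ℤ) (A : C) [t.IsGE A n] :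
    t.IsGE ((t.truncLE n).obj A) n := by
  rw [t.isGE_iff_orthogonal (n - 1) n (by omega)]
  intro W φ _
  have : t.IsLE W n := t.isLE_of_le W (n - 1) n
  exact t.to_truncLE_obj_ext
    (by rw [zero_comp]; exact t.zero_of_isLE_of_isGE _ (n - 1) n (by omega) ‹_› ‹_›)

lemma isLE_truncGE_obj_of_isLE (n : ℤ) (A : C) [t.IsLE A n] :
    t.IsLE ((t.truncGE n).obj A) n := by
  rw [t.isLE_iff_orthogonal n (n + 1) rfl]
  intro W φ _
  have : t.IsGE W n := t.isGE_of_ge W n (n + 1)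
  exact t.from_truncGE_obj_ext
    (by rw [comp_zero]; exact t.zero_of_isLE_of_isGE _ n (n + 1) (by omega) ‹_› ‹_›)

lemma nonempty_truncLEObj_iso (n : ℤ) (A : C) :
    Nonempty (truncLEObj t n A ≅ (t.truncLE n).obj A) := by
  obtain ⟨_, hX, hY, _, _, _, mem⟩ := (t.exists_triangle A n (n + 1) rfl).choose_spec
  obtain ⟨e, -⟩ := t.triangle_iso_exists mem (t.triangleLEGE_distinguished n (n + 1) rfl A)
    (Iso.refl A) n (n + 1) ⟨hX⟩ ⟨hY⟩ (show t.IsLE ((t.truncLE n).obj A) n from inferInstance)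
    (show t.IsGE ((t.truncGE (n + 1)).obj A) (n + 1) from inferInstance)
  exact ⟨Triangle.π₁.mapIso e⟩

lemma nonempty_truncGEObj_iso (n : ℤ) (A : C) :
    Nonempty (truncGEObj t n A ≅ (t.truncGE n).obj A) := by
  obtain ⟨hX, hY, _, _, _, mem⟩ :=
    (t.exists_triangle A (n - 1) n (by omega)).choose_spec.choose_spec
  obtain ⟨e, -⟩ := t.triangle_iso_exists mem (t.triangleLTGE_distinguished n A)
    (Iso.refl A) (n - 1) n ⟨hX⟩ ⟨hY⟩ inferInstance inferInstance
  exact ⟨Triangle.π₃.mapIso e⟩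

lemma nonempty_cohObj_iso (n : ℤ) (A : C) :
    Nonempty (cohObj t n A ≅ ((t.truncGELE n n).obj A)⟦n⟧) := by
  obtain ⟨e₁⟩ := nonempty_truncLEObj_iso t n A
  obtain ⟨e₂⟩ := nonempty_truncGEObj_iso t n (truncLEObj t n A)
  exact ⟨(shiftFunctor C n).mapIso (e₂ ≪≫ (t.truncGE n).mapIso e₁)⟩

lemma nonempty_cohObj_iso_of_isLE (n : ℤ) (A : C) [t.IsLE A n] :
    Nonempty (cohObj t n A ≅ ((t.truncGE n).obj A)⟦n⟧) := by
  obtain ⟨e⟩ := nonempty_cohObj_iso t n A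
  exact ⟨e ≪≫ (shiftFunctor C n).mapIso ((t.truncGE n).mapIso (asIso ((t.truncLEι n).app A)))⟩

lemma nonempty_cohObj_iso_of_isGE (n : ℤ) (A : C) [t.IsGE A n] :
    Nonempty (cohObj t n A ≅ ((t.truncLE n).obj A)⟦n⟧) := by
  obtain ⟨e⟩ := nonempty_cohObj_iso t n A
  have := isGE_truncLE_obj_of_isGE t n A
  exact ⟨e ≪≫ (shiftFunctor C n).mapIso (asIso ((t.truncGEπ n).app ((t.truncLE n).obj A))).symm⟩

lemma isGE_succ_of_isZero_cohObj {n : ℤ} {A : C} [t.IsGE A n] (h : IsZero (cohObj t n A)) :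
    t.IsGE A (n + 1) := by
  obtain ⟨e⟩ := nonempty_cohObj_iso_of_isGE t n A
  rw [t.isGE_iff_isZero_truncLE_obj n (n + 1) rfl]
  exact IsZero.of_full_of_faithful_of_isZero (shiftFunctor C n) _ (h.of_iso e.symm)

lemma isLE_pred_of_isZero_cohObj {n : ℤ} {A : C} [t.IsLE A n] (h : IsZero (cohObj t n A)) :
    t.IsLE A (n - 1) := by
  obtain ⟨e⟩ := nonempty_cohObj_iso_of_isLE t n A
  rw [t.isLE_iff_isZero_truncGE_obj (n - 1) n (by omega)]
  exact IsZero.of_full_of_faithful_of_isZero (shiftFunctor C n) _ (h.of_iso e.symm)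

lemma isGE_of_memIcc (ht : IsBoundedTStructure t) {a b : ℤ} {x : C} (hx : MemIcc t a b x) :
    t.IsGE x a := by
  obtain ⟨m, -, hm, -⟩ := ht x
  have : t.IsGE x m := ⟨hm⟩
  rcases le_total a m with ham | hma
  · exact t.isGE_of_ge x a m ham
  induction a, hma using Int.leInduction with
  | base => infer_instance
  | succ n hmn ih =>
    have := ih (fun i hi => hx i (by omega))
    exact isGE_succ_of_isZero_cohObj t (hx n (by omega))

lemma isLE_of_memIcc (ht : IsBoundedTStructure t) {a b : ℤ} {x : C} (hx : MemIcc t a b x) :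
    t.IsLE x b := by
  obtain ⟨-, M, -, hM⟩ := ht x
  have : t.IsLE x M := ⟨hM⟩
  rcases le_total M b with hMb | hbM
  · exact t.isLE_of_le x M b hMb
  induction b, hbM using Int.leInductionDown with
  | base => infer_instance
  | pred n hnM ih =>
    have := ih (fun i hi => hx i (by omega))
    exact isLE_pred_of_isZero_cohObj t (hx n (by omega))

noncomputable def truncGEHomAddEquiv (n : ℤ) (X Y : C) [t.IsGE Y n] :
    ((t.truncGE n).obj X ⟶ Y) ≃+ (X ⟶ Y) :=
  AddEquiv.ofBijective (Preadditive.leftComp Y ((t.truncGEπ n).app X))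
    ⟨fun _ _ h => t.from_truncGE_obj_ext h, fun f => ⟨t.descTruncGE f n, t.π_descTruncGE f n⟩⟩

noncomputable def truncLEHomAddEquiv (n : ℤ) (X Y : C) [t.IsLE X n] :
    (X ⟶ (t.truncLE n).obj Y) ≃+ (X ⟶ Y) :=
  AddEquiv.ofBijective (Preadditive.rightComp X ((t.truncLEι n).app Y))
    ⟨fun _ _ h => t.to_truncLE_obj_ext h, fun f => ⟨t.liftTruncLE f n, t.liftTruncLE_ι f n⟩⟩

end

/-- If `x ∈ [[a,b]]_H` and `y ∈ [[c,d]]_H` for the heart of a bounded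
t-structure, then `Hom(y, x⟦a-d⟧) ≅ Hom(H^d(y), H^a(x))` as abelian groups. -/
theorem hom_shift_iso_hom_top_bottom_cohomology
    (t : TStructure C) (ht : IsBoundedTStructure t) (x y : C) (a b c d : ℤ)
    (hx : MemIccStrict t a b x) (hy : MemIccStrict t c d y) :
    Nonempty ((y ⟶ x⟦(a - d : ℤ)⟧) ≃+ (cohObj t d y ⟶ cohObj t a x)) := by
  have : t.IsLE y d := isLE_of_memIcc t ht hy.1
  have : t.IsGE x a := isGE_of_memIcc t ht hx.1
  have : t.IsGE (x⟦a - d⟧) d := t.isGE_shift x a (a - d) d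
  set P := (t.truncGE d).obj y
  have : t.IsLE P d := isLE_truncGE_obj_of_isLE t d y
  have : t.IsLE (P⟦d - a⟧) a := t.isLE_shift P d (d - a) a
  obtain ⟨ey⟩ := nonempty_cohObj_iso_of_isLE t d y
  obtain ⟨ex⟩ := nonempty_cohObj_iso_of_isGE t a x
  exact ⟨(truncGEHomAddEquiv t d y _).symm
    |>.trans (shiftHomAddEquiv P x (d - a) (a - d) (by omega)).symm
    |>.trans (truncLEHomAddEquiv t a _ x).symm
    |>.trans (Linear.homCongr ℤ ((shiftFunctorAdd' C d (-a) (d - a) (by omega)).app P)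
      (Iso.refl _)).toAddEquiv
    |>.trans (shiftHomAddEquiv (P⟦d⟧) _ (-a) a (by omega))
    |>.trans (Linear.homCongr ℤ ey.symm ex.symm).toAddEquiv⟩

end TSt
end

section
/- Let A and H be hearts of bounded t-structures on a triangulated category T, and suppose A is a length category with finitely many simple objects. Then there exist integers a ≤ b such that every object of H has A-cohomology concentrated in degrees [a,b] (i.e. H ∈ [a,b]_A). -/
open CategoryTheory Limits Pretriangulated Triangulated

namespace TSt

variable {C : Type*} [Category C] [Preadditive C] [HasZeroObject C] [HasShift C ℤ]
  [∀ (n : ℤ), (shiftFunctor C n).Additive] [Pretriangulated C]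

/-- The extension closure of a class of objects in a pretriangulated category:
the smallest class containing the given objects and zero objects, and closed under
extensions (distinguished triangles). -/
inductive ExtClosure (P : C → Prop) : C → Prop
  | of {x : C} (h : P x) : ExtClosure P x
  | zero {x : C} (h : IsZero x) : ExtClosure P x
  | ext {x y z : C} (f : x ⟶ y) (g : y ⟶ z) (w : z ⟶ x⟦(1 : ℤ)⟧)
      (hT : Triangle.mk f g w ∈ distTriang C)
      (hx : ExtClosure P x) (hz : ExtClosure P z) : ExtClosure P y

/-
Every object of `A` is an iterated extension of the finitely many simples, so `A` lies in
`t₂.ge c ∩ t₂.le d` for some `c ≤ 0 ≤ d`. Let `x ∈ H` be `≤ n` for `t₁`, with `c + n > 0`.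
Then `τ_{≥ n} x` is an object of `A` shifted by `-n`, hence `≥ c + n > 0` for `t₂`, so the
map `x ⟶ τ_{≥ n} x` vanishes because `x` is `≤ 0` for `t₂`: thus `x` is `≤ n - 1` for `t₁`.
Descending from the bound given by boundedness of `t₁` yields `x ≤ -c`, and dually `x ≥ -d`.
-/

section Truncation

variable (t : TStructure C)

lemma exists_triangle_truncLEObj (n : ℤ) (A : C) :
    ∃ (G : C) (_ : t.IsLE (truncLEObj t n A) n) (_ : t.IsGE G (n + 1))
      (f : truncLEObj t n A ⟶ A) (g : A ⟶ G) (h : G ⟶ (truncLEObj t n A)⟦(1 : ℤ)⟧),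
      Triangle.mk f g h ∈ distTriang C := by
  obtain ⟨hL, hG, f, g, h, mem⟩ := (t.exists_triangle A n (n + 1) rfl).choose_spec.choose_spec
  exact ⟨_, ⟨hL⟩, ⟨hG⟩, f, g, h, mem⟩

lemma exists_triangle_truncGEObj (n : ℤ) (A : C) :
    ∃ (L : C) (_ : t.IsLE L (n - 1)) (_ : t.IsGE (truncGEObj t n A) n)
      (f : L ⟶ A) (g : A ⟶ truncGEObj t n A) (h : truncGEObj t n A ⟶ L⟦(1 : ℤ)⟧),
      Triangle.mk f g h ∈ distTriang C := by
  obtain ⟨hL, hG, f, g, h, mem⟩ :=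
    (t.exists_triangle A (n - 1) n (by omega)).choose_spec.choose_spec
  exact ⟨_, ⟨hL⟩, ⟨hG⟩, f, g, h, mem⟩

lemma isZero_truncLEObj_of_isGE {n m : ℤ} (hnm : n < m) (A : C) [t.IsGE A m] :
    IsZero (truncLEObj t n A) := by
  obtain ⟨G, _, _, _, _, _, mem⟩ := exists_triangle_truncLEObj t n A
  have : t.IsGE (G⟦(-1 : ℤ)⟧) (n + 2) := t.isGE_shift G (n + 1) (-1) (n + 2)
  have : t.IsGE A (n + 1) := t.isGE_of_ge A (n + 1) m
  have : t.IsGE (truncLEObj t n A) (n + 1) :=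
    t.isGE₂ _ (inv_rot_of_distTriang _ mem) (n + 1)
      (t.isGE_of_ge (G⟦(-1 : ℤ)⟧) (n + 1) (n + 2)) ‹_›
  exact t.isZero _ n (n + 1)

lemma isZero_truncGEObj_of_isLE {n m : ℤ} (hmn : m < n) (A : C) [t.IsLE A m] :
    IsZero (truncGEObj t n A) := by
  obtain ⟨L, _, _, _, _, _, mem⟩ := exists_triangle_truncGEObj t n A
  have : t.IsLE (L⟦(1 : ℤ)⟧) (n - 2) := t.isLE_shift L (n - 1) 1 (n - 2)
  have : t.IsLE (truncGEObj t n A) (n - 1) :=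
    t.isLE₂ _ (rot_of_distTriang _ mem) (n - 1) (t.isLE_of_le A m (n - 1))
      (t.isLE_of_le (L⟦(1 : ℤ)⟧) (n - 2) (n - 1))
  exact t.isZero _ (n - 1) n

lemma isLE_truncLEObj_of_isLE {b : ℤ} (n : ℤ) (A : C) [t.IsLE A b] :
    t.IsLE (truncLEObj t n A) b := by
  obtain ⟨G, _, _, f, _, _, mem⟩ := exists_triangle_truncLEObj t n A
  by_cases hnb : n ≤ b
  · exact t.isLE_of_le _ n b
  have : t.IsLE ((truncLEObj t n A)⟦(1 : ℤ)⟧) (n - 1) := t.isLE_shift _ n 1 (n - 1)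
  have : t.IsLE G n :=
    t.isLE₂ _ (rot_of_distTriang _ mem) n (t.isLE_of_le A b n)
      (t.isLE_of_le ((truncLEObj t n A)⟦(1 : ℤ)⟧) (n - 1) n)
  have : IsIso f := (Triangle.isZero₃_iff_isIso₁ _ mem).1 (t.isZero G n (n + 1))
  exact t.isLE_of_iso (asIso f).symm b

lemma memIcc_of_isGE_of_isLE {a b : ℤ} (x : C) [t.IsGE x a] [t.IsLE x b] : MemIcc t a b x := by
  intro i hi
  refine (shiftFunctor C i).map_isZero (?_ : IsZero (truncGEObj t i (truncLEObj t i x)))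
  rcases hi with hi | hi
  · have := t.isLE_of_isZero (isZero_truncLEObj_of_isGE t hi x) (i - 1)
    exact isZero_truncGEObj_of_isLE t (sub_one_lt i) _
  · have := isLE_truncLEObj_of_isLE t (b := b) i x
    exact isZero_truncGEObj_of_isLE t hi _

end Truncation

section Heart

variable {t t' : TStructure C}

lemma isLE_of_extClosure {P : C → Prop} {n : ℤ} (hP : ∀ z, P z → t.IsLE z n) {x : C}
    (hx : ExtClosure P x) : t.IsLE x n := by
  induction hx with
  | of h => exact hP _ h
  | zero h => exact t.isLE_of_isZero h n
  | ext _ _ _ hT _ _ ih₁ ih₃ => exact t.isLE₂ _ hT n ih₁ ih₃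

lemma isGE_of_extClosure {P : C → Prop} {n : ℤ} (hP : ∀ z, P z → t.IsGE z n) {x : C}
    (hx : ExtClosure P x) : t.IsGE x n := by
  induction hx with
  | of h => exact hP _ h
  | zero h => exact t.isGE_of_isZero h n
  | ext _ _ _ hT _ _ ih₁ ih₃ => exact t.isGE₂ _ hT n ih₁ ih₃

lemma eventually_isLE_atTop (hbdd : IsBoundedTStructure t) (x : C) :
    ∀ᶠ n in Filter.atTop, t.IsLE x n := by
  obtain ⟨_, b, _, hb⟩ := hbdd x
  have : t.IsLE x b := ⟨hb⟩
  exact Filter.eventually_atTop.2 ⟨b, fun n hn => t.isLE_of_le x b n hn⟩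

lemma eventually_isGE_atBot (hbdd : IsBoundedTStructure t) (x : C) :
    ∀ᶠ n in Filter.atBot, t.IsGE x n := by
  obtain ⟨a, _, ha, _⟩ := hbdd x
  have : t.IsGE x a := ⟨ha⟩
  exact Filter.eventually_atBot.2 ⟨a, fun n hn => t.isGE_of_ge x n a hn⟩

lemma isLE_of_forall_isLE_sub_one {x : C} {m : ℤ}
    (hstep : ∀ n, m < n → t.IsLE x n → t.IsLE x (n - 1)) (b : ℤ) [t.IsLE x b] :
    t.IsLE x m := by
  by_cases hbm : b ≤ m
  · exact t.isLE_of_le x b m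
  suffices ∀ n, m ≤ n → t.IsLE x n → t.IsLE x m from this b (by omega) ‹_›
  intro n hn
  induction n, hn using Int.leInduction with
  | base => exact id
  | succ n _ ih => exact fun h => ih (by simpa using hstep (n + 1) (by omega) h)

lemma isGE_of_forall_isGE_add_one {x : C} {m : ℤ}
    (hstep : ∀ n, n < m → t.IsGE x n → t.IsGE x (n + 1)) (a : ℤ) [t.IsGE x a] :
    t.IsGE x m := by
  by_cases ham : m ≤ a
  · exact t.isGE_of_ge x m a
  suffices ∀ n, n ≤ m → t.IsGE x n → t.IsGE x m from this a (by omega) ‹_›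
  intro n hn
  induction n, hn using Int.leInductionDown with
  | base => exact id
  | pred n _ ih => exact fun h => ih (by simpa using hstep (n - 1) (by omega) h)

lemma inHeart_shift (y : C) (n : ℤ) [t.IsLE y n] [t.IsGE y n] : InHeart t (y⟦n⟧) :=
  ⟨t.le_shift n n 0 (add_zero n) y (t.le_of_isLE y n),
    t.ge_shift n n 0 (add_zero n) y (t.ge_of_isGE y n)⟩

lemma isLE_sub_one_of_heart_isGE {c : ℤ} (hA : ∀ y, InHeart t y → t'.IsGE y c)
    (x : C) [t'.IsLE x 0] {n : ℤ} (hn : 0 < c + n) [t.IsLE x n] : t.IsLE x (n - 1) := by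
  set G := (t.truncGE n).obj x
  have : t.IsLE ((t.truncLT n).obj x⟦(1 : ℤ)⟧) (n - 2) := t.isLE_shift _ (n - 1) 1 (n - 2)
  have : t.IsLE G n := t.isLE₂ _ (rot_of_distTriang _ (t.triangleLTGE_distinguished n x)) n
    ‹_› (t.isLE_of_le ((t.truncLT n).obj x⟦(1 : ℤ)⟧) (n - 2) n)
  have : t'.IsGE (G⟦n⟧) c := hA _ (inHeart_shift G n)
  have : t'.IsGE G (c + n) := t'.isGE_of_shift G (c + n) n c
  have hπ : (t.truncGEπ n).app x = 0 :=
    t'.zero_of_isLE_of_isGE _ 0 (c + n) hn ‹t'.IsLE x 0› ‹_›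
  rw [t.isLE_iff_isZero_truncGE_obj (n - 1) n (by omega), IsZero.iff_id_eq_zero]
  exact t.from_truncGE_obj_ext (by simp [hπ])

lemma isGE_add_one_of_heart_isLE {d : ℤ} (hA : ∀ y, InHeart t y → t'.IsLE y d)
    (x : C) [t'.IsGE x 0] {n : ℤ} (hn : d + n < 0) [t.IsGE x n] : t.IsGE x (n + 1) := by
  set L := (t.truncLT (n + 1)).obj x
  have : t.IsGE ((t.truncGE (n + 1)).obj x⟦(-1 : ℤ)⟧) (n + 2) :=
    t.isGE_shift _ (n + 1) (-1) (n + 2)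
  have : t.IsGE L n :=
    t.isGE₂ _ (inv_rot_of_distTriang _ (t.triangleLTGE_distinguished (n + 1) x)) n
      (t.isGE_of_ge ((t.truncGE (n + 1)).obj x⟦(-1 : ℤ)⟧) n (n + 2)) ‹t.IsGE x n›
  have : t'.IsLE (L⟦n⟧) d := hA _ (inHeart_shift L n)
  have : t'.IsLE L (d + n) := t'.isLE_of_shift L (d + n) n d
  have hι : (t.truncLTι (n + 1)).app x = 0 :=
    t'.zero_of_isLE_of_isGE _ (d + n) 0 hn ‹_› ‹t'.IsGE x 0›
  rw [t.isGE_iff_isZero_truncLT_obj, IsZero.iff_id_eq_zero]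
  exact t.to_truncLT_obj_ext (by simp [hι])

lemma isLE_of_heart_isGE (hbdd : IsBoundedTStructure t) {c : ℤ}
    (hA : ∀ y, InHeart t y → t'.IsGE y c) (x : C) [t'.IsLE x 0] : t.IsLE x (-c) := by
  obtain ⟨_, b, _, hb⟩ := hbdd x
  have : t.IsLE x b := ⟨hb⟩
  exact isLE_of_forall_isLE_sub_one
    (fun n hn _ => isLE_sub_one_of_heart_isGE hA x (by omega)) b

lemma isGE_of_heart_isLE (hbdd : IsBoundedTStructure t) {d : ℤ}
    (hA : ∀ y, InHeart t y → t'.IsLE y d) (x : C) [t'.IsGE x 0] : t.IsGE x (-d) := by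
  obtain ⟨a, _, ha, _⟩ := hbdd x
  have : t.IsGE x a := ⟨ha⟩
  exact isGE_of_forall_isGE_add_one
    (fun n hn _ => isGE_add_one_of_heart_isLE hA x (by omega)) a

end Heart

theorem heart_bounded_with_respect_to_length_heart_general
    (t₁ t₂ : TStructure C) (ht₁ : IsBoundedTStructure t₁) (ht₂ : IsBoundedTStructure t₂)
    (ι : Type) (hι : Finite ι) (S : ι → C)
    (hlength : ∀ x : C, InHeart t₁ x → ExtClosure (fun z => ∃ i, z = S i) x) :
    ∃ a b : ℤ, a ≤ b ∧ ∀ x : C, InHeart t₂ x → MemIcc t₁ a b x := by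
  obtain ⟨c, hc, hc0⟩ : ∃ c, (∀ i, t₂.IsGE (S i) c) ∧ c ≤ 0 :=
    ((Filter.eventually_all.2 fun i => eventually_isGE_atBot ht₂ (S i)).and
      (Filter.eventually_le_atBot 0)).exists
  obtain ⟨d, hd, hd0⟩ : ∃ d, (∀ i, t₂.IsLE (S i) d) ∧ 0 ≤ d :=
    ((Filter.eventually_all.2 fun i => eventually_isLE_atTop ht₂ (S i)).and
      (Filter.eventually_ge_atTop 0)).exists
  have hA_ge : ∀ y, InHeart t₁ y → t₂.IsGE y c := fun y hy =>
    isGE_of_extClosure (by rintro _ ⟨i, rfl⟩; exact hc i) (hlength y hy)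
  have hA_le : ∀ y, InHeart t₁ y → t₂.IsLE y d := fun y hy =>
    isLE_of_extClosure (by rintro _ ⟨i, rfl⟩; exact hd i) (hlength y hy)
  refine ⟨-d, -c, by omega, fun x ⟨hle, hge⟩ => ?_⟩
  have : t₂.IsLE x 0 := ⟨hle⟩
  have : t₂.IsGE x 0 := ⟨hge⟩
  have := isGE_of_heart_isLE ht₁ hA_le x
  have := isLE_of_heart_isGE ht₁ hA_ge x
  exact memIcc_of_isGE_of_isLE t₁ x

/-- If the heart `A` of a bounded t-structure `t₁` is a length category
with finitely many simples (every object of `A` is a finite iterated extension of a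
finite family of objects of `A`), and `H` is the heart of any bounded t-structure `t₂`,
then there exist `a ≤ b` with `H ∈ [a,b]_A`. -/
theorem heart_bounded_with_respect_to_length_heart
    (t₁ t₂ : TStructure C) (ht₁ : IsBoundedTStructure t₁) (ht₂ : IsBoundedTStructure t₂)
    (ι : Type) (hι : Finite ι) (S : ι → C) (hS : ∀ i, InHeart t₁ (S i))
    (hlength : ∀ x : C, InHeart t₁ x → ExtClosure (fun z => ∃ i, z = S i) x) :
    ∃ a b : ℤ, a ≤ b ∧ ∀ x : C, InHeart t₂ x → MemIcc t₁ a b x :=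
  heart_bounded_with_respect_to_length_heart_general t₁ t₂ ht₁ ht₂ ι hι S hlength

end TSt
end

section
/- Let {y_1, ..., y_r} be a simple minded collection U in T = D^b(A) for a finite dimensional algebra A, and let x ∈ T satisfy x ∈ [a,b]_U (cohomology with respect to the heart of the bounded t-structure corresponding to U concentrated in [a,b]). Then for any i, x ∈ [a, b+1]_{ν_i U}, where ν_i U is the left mutation of U at y_i. -/
/-!
For `j ≠ i`, rotating the mutation triangle gives a distinguished triangle
`c j ⟶ y' j ⟶ ((y j)⟦-1⟧)⟦1⟧ ≅ y j`, and `c j` is an iterated extension of copies of `y i`.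
Hom-vanishing between `x` and all `y k` in a fixed degree therefore passes to `y' j` in the
same degree, by the long exact Hom sequences. For `j = i` we have `y' i ≅ (y i)⟦1⟧`, which
uses the vanishing for `y i` one degree lower on the left and one degree higher on the right;
the latter is what moves the upper bound from `b` to `b + 1`.
-/

open CategoryTheory Limits Pretriangulated DerivedCategory

namespace SMCF

variable (A : Type) [Ring A] [Algebra ℂ A] [FiniteDimensional ℂ A]
variable [HasDerivedCategory (ModuleCat.{0} A)]

/-- An object of the derived category is (cohomologically) bounded, i.e. belongs to
`D^b(mod A)`. -/
def Bounded (x : DerivedCategory (ModuleCat.{0} A)) : Prop :=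
  ∃ a b : ℤ, ∀ i : ℤ, (i < a ∨ b < i) →
    IsZero ((homologyFunctor (ModuleCat.{0} A) i).obj x)

/-- The thick closure of a class of objects: the smallest class containing them which is
closed under shifts, extensions (cones) and retracts (direct summands). -/
inductive ThickClosure (P : DerivedCategory (ModuleCat.{0} A) → Prop) :
    DerivedCategory (ModuleCat.{0} A) → Prop
  | of {x} (h : P x) : ThickClosure P x
  | zero {x} (h : IsZero x) : ThickClosure P x
  | shift {x} (n : ℤ) (h : ThickClosure P x) : ThickClosure P (x⟦n⟧)
  | ext {x y z} (f : x ⟶ y) (g : y ⟶ z) (w : z ⟶ x⟦(1 : ℤ)⟧)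
      (hT : Triangle.mk f g w ∈ distTriang _)
      (hx : ThickClosure P x) (hz : ThickClosure P z) : ThickClosure P y
  | retract {x z} (s : x ⟶ z) (r : z ⟶ x) (hsr : s ≫ r = 𝟙 x)
      (h : ThickClosure P z) : ThickClosure P x

/-- The extension closure of a class of objects (no shifts): the smallest class
containing them and all zero objects, closed under extensions. -/
inductive ExtClosure (P : DerivedCategory (ModuleCat.{0} A) → Prop) :
    DerivedCategory (ModuleCat.{0} A) → Prop
  | of {x} (h : P x) : ExtClosure P x
  | zero {x} (h : IsZero x) : ExtClosure P x
  | iso {x y} (e : x ≅ y) (h : ExtClosure P x) : ExtClosure P y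
  | ext {x y z} (f : x ⟶ y) (g : y ⟶ z) (w : z ⟶ x⟦(1 : ℤ)⟧)
      (hT : Triangle.mk f g w ∈ distTriang _)
      (hx : ExtClosure P x) (hz : ExtClosure P z) : ExtClosure P y

/-- A simple minded collection in `D^b(mod A)`: a finite collection `y i` of (bounded)
objects with no negative self-extensions, `Hom(y i, y j) ≅ ℂ δ_{ij}`, and which
generates `D^b(mod A)` as a thick subcategory. -/
structure SMC where
  ι : Type
  [fin : Fintype ι]
  y : ι → DerivedCategory (ModuleCat.{0} A)
  bounded : ∀ i, Bounded A (y i)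
  negExt : ∀ i j (t : ℤ), t < 0 → ∀ f : y i ⟶ (y j)⟦t⟧, f = 0
  hom_zero : ∀ i j, i ≠ j → ∀ f : y i ⟶ y j, f = 0
  brick : ∀ i, Nonempty (End (y i) ≃+* ℂ)
  generates : ∀ x, Bounded A x → ThickClosure A (fun z => ∃ i, z = y i) x

attribute [instance] SMC.fin

/-- `x ∈ [a,b]` with respect to a family `y` of objects (e.g. a simple minded
collection), via the Hom-vanishing characterisation of cohomology bounds with respect
to the corresponding heart: `Hom(y i, x[t]) = 0` for `t < a` and
`Hom(x, (y i)[t]) = 0` for `t < -b`. -/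
def MemIccFam {ι : Type} (y : ι → DerivedCategory (ModuleCat.{0} A)) (a b : ℤ)
    (x : DerivedCategory (ModuleCat.{0} A)) : Prop :=
  (∀ i (t : ℤ), t < a → ∀ f : y i ⟶ x⟦t⟧, f = 0) ∧
  (∀ i (t : ℤ), t < -b → ∀ f : x ⟶ (y i)⟦t⟧, f = 0)

/-- `x ∈ [a,b]_U` for a simple minded collection `U`. -/
def MemIcc (U : SMC A) (a b : ℤ) (x : DerivedCategory (ModuleCat.{0} A)) : Prop :=
  MemIccFam A U.y a b x

/-- The left mutation `ν_i U` of a simple minded collection `U` at `y i`: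
`y' i = (y i)[1]`, and for `j ≠ i`, `y' j` is the cone of a (minimal) left approximation
`(y j)[-1] ⟶ c j` into the extension closure of `y i`. -/
structure LeftMutation (U : SMC A) (i : U.ι) where
  y' : U.ι → DerivedCategory (ModuleCat.{0} A)
  at_i : Nonempty (y' i ≅ (U.y i)⟦(1 : ℤ)⟧)
  c : U.ι → DerivedCategory (ModuleCat.{0} A)
  hc : ∀ j, j ≠ i → ExtClosure A (fun z => z = U.y i) (c j)
  φ : ∀ j, (U.y j)⟦(-1 : ℤ)⟧ ⟶ c j
  approx : ∀ j, j ≠ i → ∀ z, ExtClosure A (fun w => w = U.y i) z →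
      ∀ g : (U.y j)⟦(-1 : ℤ)⟧ ⟶ z, ∃ h : c j ⟶ z, φ j ≫ h = g
  ψ : ∀ j, c j ⟶ y' j
  χ : ∀ j, y' j ⟶ ((U.y j)⟦(-1 : ℤ)⟧)⟦(1 : ℤ)⟧
  tri : ∀ j, j ≠ i → Triangle.mk (φ j) (ψ j) (χ j) ∈ distTriang _


section ZeroMorphisms

variable {C : Type*} [Category C] [HasZeroMorphisms C]

lemma eq_zero_of_iso_src {X Y Z : C} (e : Y ≅ X) (h : ∀ g : Y ⟶ Z, g = 0) (f : X ⟶ Z) :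
    f = 0 := by
  simpa using e.inv ≫= h (e.hom ≫ f)

lemma eq_zero_of_iso_tgt {X Y Z : C} (e : Y ≅ Z) (h : ∀ g : X ⟶ Z, g = 0) (f : X ⟶ Y) :
    f = 0 := by
  simpa using h (f ≫ e.hom) =≫ e.inv

end ZeroMorphisms

section Pretriangulated

variable {C : Type*} [Category C] [Preadditive C] [HasZeroObject C] [HasShift C ℤ]
  [∀ n : ℤ, (shiftFunctor C n).Additive] [Pretriangulated C]

omit [HasZeroObject C] [Pretriangulated C] in
lemma eq_zero_of_shift {X Y : C} (n : ℤ) (h : ∀ g : X ⟶ Y, g = 0) (f : X⟦n⟧ ⟶ Y⟦n⟧) :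
    f = 0 := by
  obtain ⟨g, rfl⟩ := (shiftFunctor C n).map_surjective f
  rw [h g, Functor.map_zero]

lemma eq_zero_of_distTriang_obj₂_src {T : Triangle C} (hT : T ∈ distTriang C) {W : C}
    (h₁ : ∀ g : T.obj₁ ⟶ W, g = 0) (h₃ : ∀ g : T.obj₃ ⟶ W, g = 0) (f : T.obj₂ ⟶ W) :
    f = 0 := by
  obtain ⟨g, rfl⟩ := Triangle.yoneda_exact₂ T hT f (h₁ _)
  rw [h₃ g, comp_zero]

lemma eq_zero_of_distTriang_obj₂_tgt {T : Triangle C} (hT : T ∈ distTriang C) {W : C}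
    (h₁ : ∀ g : W ⟶ T.obj₁, g = 0) (h₃ : ∀ g : W ⟶ T.obj₃, g = 0) (f : W ⟶ T.obj₂) :
    f = 0 := by
  obtain ⟨g, rfl⟩ := Triangle.coyoneda_exact₂ T hT f (h₃ _)
  rw [h₁ g, zero_comp]

end Pretriangulated

section

variable {A}
omit [Algebra ℂ A] [FiniteDimensional ℂ A]

lemma ExtClosure.hom_from_eq_zero {P : DerivedCategory (ModuleCat.{0} A) → Prop}
    {W : DerivedCategory (ModuleCat.{0} A)} (h : ∀ z, P z → ∀ f : z ⟶ W, f = 0)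
    {z : DerivedCategory (ModuleCat.{0} A)} (hz : ExtClosure A P z) (f : z ⟶ W) : f = 0 := by
  induction hz with
  | of hP => exact h _ hP f
  | zero hzero => exact hzero.eq_of_src f 0
  | iso e _ ih => exact eq_zero_of_iso_src e ih f
  | ext _ _ _ hT _ _ ih₁ ih₃ => exact eq_zero_of_distTriang_obj₂_src hT ih₁ ih₃ f

lemma ExtClosure.hom_to_shift_eq_zero {P : DerivedCategory (ModuleCat.{0} A) → Prop}
    {W : DerivedCategory (ModuleCat.{0} A)} (t : ℤ) (h : ∀ z, P z → ∀ f : W ⟶ z⟦t⟧, f = 0)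
    {z : DerivedCategory (ModuleCat.{0} A)} (hz : ExtClosure A P z) (f : W ⟶ z⟦t⟧) :
    f = 0 := by
  induction hz with
  | of hP => exact h _ hP f
  | zero hzero => exact ((shiftFunctor _ t).map_isZero hzero).eq_of_tgt f 0
  | iso e _ ih => exact eq_zero_of_iso_tgt ((shiftFunctor _ t).mapIso e).symm ih f
  | ext _ _ _ hT _ _ ih₁ ih₃ =>
    exact eq_zero_of_distTriang_obj₂_tgt (Triangle.shift_distinguished _ hT t) ih₁ ih₃ f

namespace LeftMutation

variable {U : SMC A} {i : U.ι} (V : LeftMutation A U i)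

lemma y'_hom_shift_eq_zero {W : DerivedCategory (ModuleCat.{0} A)} {t : ℤ}
    (hW : ∀ k (f : U.y k ⟶ W⟦t⟧), f = 0) (hi : ∀ f : U.y i ⟶ W⟦t - 1⟧, f = 0)
    (j : U.ι) (f : V.y' j ⟶ W⟦t⟧) : f = 0 := by
  by_cases hj : j = i
  · subst hj
    exact eq_zero_of_iso_src V.at_i.some.symm (eq_zero_of_iso_tgt
      ((shiftFunctorAdd' _ (t - 1) 1 t (by omega)).app W) (eq_zero_of_shift 1 hi)) f
  · have hc : ∀ g : V.c j ⟶ W⟦t⟧, g = 0 :=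
      ExtClosure.hom_from_eq_zero (fun z hz => hz ▸ hW i) (V.hc j hj)
    have hy : ∀ g : ((U.y j)⟦(-1 : ℤ)⟧)⟦(1 : ℤ)⟧ ⟶ W⟦t⟧, g = 0 :=
      eq_zero_of_iso_src ((shiftFunctorCompIsoId _ (-1 : ℤ) 1 (by norm_num)).app (U.y j)).symm
        (hW j)
    exact eq_zero_of_distTriang_obj₂_src (rot_of_distTriang _ (V.tri j hj)) hc hy f

lemma hom_y'_shift_eq_zero {W : DerivedCategory (ModuleCat.{0} A)} {t : ℤ}
    (hW : ∀ k (f : W ⟶ (U.y k)⟦t⟧), f = 0) (hi : ∀ f : W ⟶ (U.y i)⟦t + 1⟧, f = 0)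
    (j : U.ι) (f : W ⟶ (V.y' j)⟦t⟧) : f = 0 := by
  by_cases hj : j = i
  · subst hj
    exact eq_zero_of_iso_tgt ((shiftFunctor _ t).mapIso V.at_i.some ≪≫
      (shiftFunctorAdd' _ 1 t (t + 1) (add_comm _ _)).symm.app (U.y j)) hi f
  · have hc : ∀ g : W ⟶ (V.c j)⟦t⟧, g = 0 :=
      ExtClosure.hom_to_shift_eq_zero t (fun z hz => hz ▸ hW i) (V.hc j hj)
    have hy : ∀ g : W ⟶ (((U.y j)⟦(-1 : ℤ)⟧)⟦(1 : ℤ)⟧)⟦t⟧, g = 0 :=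
      eq_zero_of_iso_tgt ((shiftFunctor _ t).mapIso
        ((shiftFunctorCompIsoId _ (-1 : ℤ) 1 (by norm_num)).app (U.y j))) (hW j)
    exact eq_zero_of_distTriang_obj₂_tgt (Triangle.shift_distinguished _
      (rot_of_distTriang _ (V.tri j hj)) t) hc hy f

end LeftMutation

end

theorem memIcc_left_mutation
    (U : SMC A) (x : DerivedCategory (ModuleCat.{0} A))
    (a b : ℤ) (h : MemIcc A U a b x)
    (i : U.ι) (V : LeftMutation A U i) :
    MemIccFam A V.y' a (b + 1) x := by
  obtain ⟨hsrc, htgt⟩ := h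
  refine ⟨fun j t ht => ?_, fun j t ht => ?_⟩
  · exact V.y'_hom_shift_eq_zero (fun k => hsrc k t ht) (hsrc i (t - 1) (by omega)) j
  · exact V.hom_y'_shift_eq_zero (fun k => htgt k t (by omega)) (htgt i (t + 1) (by omega)) j

end SMCF
end

section
/- Let U = {y_1,...,y_r} be a simple minded collection in T = D^b(A), x ∈ [a,b]_U, and suppose Hom_T(H^b_U(x), y_i) = 0 for some i. Then x ∈ [a,b]_{ν_i U}, where ν_i U is the left mutation of U at y_i. -/
/-!
For `j ≠ i`, `y' j` is the middle term of the rotated triangle `c j ⟶ y' j ⟶ y j`, where `c j` is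
an iterated extension of copies of `y i`; Hom-vanishing against `y i` and `y j` therefore passes to
`y' j`, in both variances. For `j = i`, `y' i ≅ (y i)⟦1⟧` moves each bound by one degree: the lower
bound only improves, while the upper bound needs `Hom(x, (y i)⟦-b⟧) = 0`, which is the hypothesis
`Hom(H^b_U(x), y i) = 0`.
-/

open CategoryTheory Limits Pretriangulated DerivedCategory

namespace CategoryTheory

variable {C : Type*} [Category C]

lemma forall_eq_zero_of_iso [HasZeroMorphisms C] {p p' q q' : C} (α : p ≅ p') (β : q ≅ q')
    (h : ∀ f : p ⟶ q, f = 0) (f : p' ⟶ q') : f = 0 := by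
  have hf : f = α.inv ≫ (α.hom ≫ f ≫ β.inv) ≫ β.hom := by simp
  rw [hf, h (α.hom ≫ f ≫ β.inv), zero_comp, comp_zero]

lemma forall_shift_eq_zero [Preadditive C] [HasShift C ℤ]
    [∀ n : ℤ, (shiftFunctor C n).Additive] {p q : C} (n : ℤ)
    (h : ∀ f : p ⟶ q, f = 0) (f : p⟦n⟧ ⟶ q⟦n⟧) : f = 0 := by
  obtain ⟨g, rfl⟩ := (shiftFunctor C n).map_surjective f
  rw [h g, Functor.map_zero]

lemma forall_shift_left_eq_zero_iff [Preadditive C] [HasShift C ℤ]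
    [∀ n : ℤ, (shiftFunctor C n).Additive] {p q : C} {m n : ℤ} (hmn : m + n = 0) :
    (∀ f : p⟦m⟧ ⟶ q, f = 0) ↔ ∀ f : p ⟶ q⟦n⟧, f = 0 :=
  ⟨fun h => forall_eq_zero_of_iso ((shiftFunctorCompIsoId C m n hmn).app p) (Iso.refl _)
      (forall_shift_eq_zero n h),
    fun h => forall_eq_zero_of_iso (Iso.refl _) ((shiftFunctorCompIsoId C n m (by omega)).app q)
      (forall_shift_eq_zero m h)⟩

namespace Pretriangulated

variable [Preadditive C] [HasZeroObject C] [HasShift C ℤ]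
  [∀ n : ℤ, (shiftFunctor C n).Additive] [Pretriangulated C] {T : Triangle C} {m : C}

lemma forall_eq_zero_from_obj₂_of_distinguished (hT : T ∈ distTriang C)
    (h₁ : ∀ f : T.obj₁ ⟶ m, f = 0) (h₃ : ∀ f : T.obj₃ ⟶ m, f = 0) (f : T.obj₂ ⟶ m) :
    f = 0 := by
  obtain ⟨g, rfl⟩ := Triangle.yoneda_exact₂ T hT f (h₁ _)
  rw [h₃ g, comp_zero]

lemma forall_eq_zero_to_obj₂_of_distinguished (hT : T ∈ distTriang C)
    (h₁ : ∀ f : m ⟶ T.obj₁, f = 0) (h₃ : ∀ f : m ⟶ T.obj₃, f = 0) (f : m ⟶ T.obj₂) :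
    f = 0 := by
  obtain ⟨g, rfl⟩ := Triangle.coyoneda_exact₂ T hT f (h₃ _)
  rw [h₁ g, zero_comp]

end Pretriangulated

end CategoryTheory

namespace SMCF

variable {A : Type} [Ring A] [HasDerivedCategory (ModuleCat.{0} A)]

lemma ExtClosure.forall_eq_zero_from {P : DerivedCategory (ModuleCat.{0} A) → Prop}
    {m z : DerivedCategory (ModuleCat.{0} A)} (hz : ExtClosure A P z)
    (hP : ∀ w, P w → ∀ f : w ⟶ m, f = 0) (f : z ⟶ m) : f = 0 := by
  induction hz with
  | of hw => exact hP _ hw f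
  | zero hw => exact hw.eq_of_src f 0
  | iso e _ ih => exact forall_eq_zero_of_iso e (Iso.refl m) ih f
  | ext _ _ _ hT _ _ ih₁ ih₃ => exact forall_eq_zero_from_obj₂_of_distinguished hT ih₁ ih₃ f

lemma ExtClosure.forall_eq_zero_to {P : DerivedCategory (ModuleCat.{0} A) → Prop}
    {m z : DerivedCategory (ModuleCat.{0} A)} (hz : ExtClosure A P z)
    (hP : ∀ w, P w → ∀ f : m ⟶ w, f = 0) (f : m ⟶ z) : f = 0 := by
  induction hz with
  | of hw => exact hP _ hw f
  | zero hw => exact hw.eq_of_tgt f 0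
  | iso e _ ih => exact forall_eq_zero_of_iso (Iso.refl m) e ih f
  | ext _ _ _ hT _ _ ih₁ ih₃ => exact forall_eq_zero_to_obj₂_of_distinguished hT ih₁ ih₃ f

namespace LeftMutation

variable {U : SMC A} {i : U.ι} (V : LeftMutation A U i)

lemma forall_eq_zero_from_y'_self {x : DerivedCategory (ModuleCat.{0} A)} {t : ℤ}
    (h : ∀ f : U.y i ⟶ x⟦t - 1⟧, f = 0) (f : V.y' i ⟶ x⟦t⟧) : f = 0 := by
  obtain ⟨e⟩ := V.at_i
  refine forall_eq_zero_of_iso e.symm (Iso.refl _) ?_ f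
  rw [forall_shift_left_eq_zero_iff (n := -1) (by norm_num)]
  exact forall_eq_zero_of_iso (Iso.refl _)
    ((shiftFunctorAdd' (DerivedCategory (ModuleCat.{0} A)) t (-1) (t - 1) (by ring)).app x) h

lemma forall_eq_zero_to_shift_y'_self {x : DerivedCategory (ModuleCat.{0} A)} {t : ℤ}
    (h : ∀ f : x ⟶ (U.y i)⟦1 + t⟧, f = 0) (f : x ⟶ (V.y' i)⟦t⟧) : f = 0 := by
  obtain ⟨e⟩ := V.at_i
  refine forall_eq_zero_of_iso (Iso.refl x) ?_ h f
  exact (shiftFunctorAdd' (DerivedCategory (ModuleCat.{0} A)) 1 t (1 + t) rfl).app (U.y i) ≪≫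
    (shiftFunctor (DerivedCategory (ModuleCat.{0} A)) t).mapIso e.symm

lemma forall_eq_zero_from_y'_of_ne {j : U.ι} (hj : j ≠ i) {z : DerivedCategory (ModuleCat.{0} A)}
    (hi : ∀ f : U.y i ⟶ z, f = 0) (hj' : ∀ f : U.y j ⟶ z, f = 0) (f : V.y' j ⟶ z) : f = 0 :=
  forall_eq_zero_from_obj₂_of_distinguished (rot_of_distTriang _ (V.tri j hj))
    ((V.hc j hj).forall_eq_zero_from fun _ hw => hw ▸ hi)
    (forall_eq_zero_of_iso ((shiftFunctorCompIsoId _ (-1 : ℤ) 1 (by norm_num)).app _).symm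
      (Iso.refl z) hj') f

lemma forall_eq_zero_to_y'_of_ne {j : U.ι} (hj : j ≠ i) {z : DerivedCategory (ModuleCat.{0} A)}
    (hi : ∀ f : z ⟶ U.y i, f = 0) (hj' : ∀ f : z ⟶ U.y j, f = 0) (f : z ⟶ V.y' j) : f = 0 :=
  forall_eq_zero_to_obj₂_of_distinguished (rot_of_distTriang _ (V.tri j hj))
    ((V.hc j hj).forall_eq_zero_to fun _ hw => hw ▸ hi)
    (forall_eq_zero_of_iso (Iso.refl z)
      ((shiftFunctorCompIsoId _ (-1 : ℤ) 1 (by norm_num)).app _).symm hj') f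

end LeftMutation

end SMCF

namespace SMCF

variable (A : Type) [Ring A] [Algebra ℂ A] [FiniteDimensional ℂ A]
variable [HasDerivedCategory (ModuleCat.{0} A)]

theorem memIcc_left_mutation_of_hom_top_vanishes
    (U : SMC A) (x : DerivedCategory (ModuleCat.{0} A))
    (a b : ℤ) (h : MemIcc A U a b x)
    (i : U.ι) (htop : ∀ f : x ⟶ (U.y i)⟦(-b : ℤ)⟧, f = 0)
    (V : LeftMutation A U i) :
    MemIccFam A V.y' a b x := by
  obtain ⟨hlow, hhigh⟩ := h
  refine ⟨fun j t ht => ?_, fun j t ht => ?_⟩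
  · obtain rfl | hj := eq_or_ne j i
    · exact V.forall_eq_zero_from_y'_self (hlow j (t - 1) (by omega))
    · exact V.forall_eq_zero_from_y'_of_ne hj (hlow i t ht) (hlow j t ht)
  · obtain rfl | hj := eq_or_ne j i
    · refine V.forall_eq_zero_to_shift_y'_self ?_
      obtain hlt | heq := (show 1 + t ≤ -b by omega).lt_or_eq
      · exact hhigh j _ hlt
      · exact heq ▸ htop
    · have hshift := fun k => (forall_shift_left_eq_zero_iff (p := x) (q := U.y k)
        (neg_add_cancel t)).2 (hhigh k t ht)
      exact (forall_shift_left_eq_zero_iff (neg_add_cancel t)).1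
        (V.forall_eq_zero_to_y'_of_ne hj (hshift i) (hshift j))

end SMCF
end
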